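/- arXiv:2511.21393 — 12 statements merged into one kernel-verified Lean document; each statement's English description precedes it below -/
import Mathlib

section
/- For positive reals λ, μ and α > 0, define σ(α) = (λ/(α+λ))·(√(α²+μ²)/μ). Then σ(α) < 1 if and only if α(λ² − μ²) < 2μ²λ. -/
theorem stmt_0 (lam mu α : ℝ) (hlam : 0 < lam) (hmu : 0 < mu) (hα : 0 < α) :
    (lam / (α + lam)) * (Real.sqrt (α ^ 2 + mu ^ 2) / mu) < 1 ↔
      α * (lam ^ 2 - mu ^ 2) < 2 * mu ^ 2 * lam := by
  set s := Real.sqrt (α ^ 2 + mu ^ 2) with hs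
  have hsnn : 0 ≤ s := Real.sqrt_nonneg _
  have hssq : s ^ 2 = α ^ 2 + mu ^ 2 := Real.sq_sqrt (by positivity)
  have hαl : 0 < α + lam := by linarith
  have h1 : (lam / (α + lam)) * (s / mu) < 1 ↔ lam * s < (α + lam) * mu := by
    rw [div_mul_div_comm, div_lt_one (by positivity)]
  have h2 : lam * s < (α + lam) * mu ↔ (lam * s) ^ 2 < ((α + lam) * mu) ^ 2 := by
    constructor
    · intro h
      exact pow_lt_pow_left₀ h (by positivity) (by norm_num)
    · intro h
      exact lt_of_pow_lt_pow_left₀ 2 (by positivity) h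
  rw [h1, h2]
  constructor
  · intro h
    nlinarith [sq_nonneg α, sq_nonneg mu, mul_pos hα hα]
  · intro h
    nlinarith [sq_nonneg α, mul_pos hα hα]
end

section
/- Let λ, μ > 0 and σ(α) = (λ/(α+λ))·(√(α²+μ²)/μ) for α > 0. If λ ≤ μ then σ(α) < 1 for every α > 0. -/
theorem stmt_1 (lam mu : ℝ) (hlam : 0 < lam) (hmu : 0 < mu) (hle : lam ≤ mu) :
    ∀ α : ℝ, 0 < α →
      (lam / (α + lam)) * (Real.sqrt (α ^ 2 + mu ^ 2) / mu) < 1 := by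
  intro α hα
  have hs : Real.sqrt (α ^ 2 + mu ^ 2) ^ 2 = α ^ 2 + mu ^ 2 :=
    Real.sq_sqrt (by positivity)
  have hsnn := Real.sqrt_nonneg (α ^ 2 + mu ^ 2)
  have key : lam * Real.sqrt (α ^ 2 + mu ^ 2) < (α + lam) * mu := by
    have h1 : lam ^ 2 * α ^ 2 ≤ mu ^ 2 * α ^ 2 := by
      nlinarith [mul_nonneg (mul_nonneg (sub_nonneg.2 hle)
        (by linarith : (0:ℝ) ≤ mu + lam)) (sq_nonneg α)]
    refine lt_of_pow_lt_pow_left₀ 2 (by positivity) ?_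
    have h2 : (lam * Real.sqrt (α ^ 2 + mu ^ 2)) ^ 2 = lam ^ 2 * (α ^ 2 + mu ^ 2) := by
      rw [mul_pow, hs]
    nlinarith [mul_pos (mul_pos hα hlam) (mul_pos hmu hmu)]
  rw [div_mul_div_comm, div_lt_one (by positivity)]
  linarith
end

section
/- Let λ, μ > 0 with λ > μ, and σ(α) = (λ/(α+λ))·(√(α²+μ²)/μ). Then σ(α) < 1 if and only if 0 < α < 2λμ²/(λ² − μ²). -/
theorem stmt_2 (lam mu : ℝ) (hlam : 0 < lam) (hmu : 0 < mu) (hgt : lam > mu) :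
    ∀ α : ℝ, 0 < α →
      ((lam / (α + lam)) * (Real.sqrt (α ^ 2 + mu ^ 2) / mu) < 1 ↔
        α < 2 * lam * mu ^ 2 / (lam ^ 2 - mu ^ 2)) := by
  intro α hα
  have h1 : 0 < α + lam := by linarith
  have hd : 0 < lam ^ 2 - mu ^ 2 := by nlinarith
  have hsnn : 0 ≤ Real.sqrt (α ^ 2 + mu ^ 2) := Real.sqrt_nonneg _
  have hsq : Real.sqrt (α ^ 2 + mu ^ 2) ^ 2 = α ^ 2 + mu ^ 2 :=
    Real.sq_sqrt (by positivity)
  rw [div_mul_div_comm, div_lt_one (by positivity), lt_div_iff₀ hd]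
  constructor
  · intro h
    have h2 : (lam * Real.sqrt (α ^ 2 + mu ^ 2)) ^ 2 < ((α + lam) * mu) ^ 2 := by
      have hlhs : 0 ≤ lam * Real.sqrt (α ^ 2 + mu ^ 2) := by positivity
      nlinarith
    nlinarith [h2, hsq, hα.le]
  · intro h
    have h2 : (lam * Real.sqrt (α ^ 2 + mu ^ 2)) ^ 2 < ((α + lam) * mu) ^ 2 := by
      have : lam ^ 2 * (α ^ 2 + mu ^ 2) < ((α + lam) * mu) ^ 2 := by nlinarith
      nlinarith [hsq]
    have hr : 0 ≤ (α + lam) * mu := by positivity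
    nlinarith [h2, hsnn, hlam.le]
end

section
/- Let λ, μ > 0 and σ(α) = (λ/(α+λ))·(√(α²+μ²)/μ) for α > 0. The unique minimizer of σ over (0, ∞) is α* = μ²/λ, and σ(α*) = λ/√(λ² + μ²) < 1. -/
/-!
Writing `σ(α) = λ √(α² + μ²) / ((α + λ) μ)`, the claim reduces to the Cauchy–Schwarz inequality
`(α + λ) μ ≤ √(α² + μ²) √(λ² + μ²)` for the vectors `(α, μ)` and `(μ, λ)`. By Lagrange's identity
the gap between the squares of the two sides is `(αλ - μ²)²`, so equality holds exactly when
`(α, μ)` is parallel to `(μ, λ)`, i.e. `α = μ² / λ`, where `σ` equals `λ / √(λ² + μ²)`.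
-/

open Real

/-- The bound `σ(α)` on the spectral radius of the LHSS iteration matrix. -/
noncomputable def lhssBound (lam mu α : ℝ) : ℝ :=
  lam / (α + lam) * (√(α ^ 2 + mu ^ 2) / mu)

theorem sq_add_sq_mul_sq_add_sq_eq (a b c : ℝ) :
    (a ^ 2 + c ^ 2) * (b ^ 2 + c ^ 2) = ((a + b) * c) ^ 2 + (a * b - c ^ 2) ^ 2 := by
  ring

theorem add_mul_le_sqrt_mul_sqrt (a b c : ℝ) :
    (a + b) * c ≤ √(a ^ 2 + c ^ 2) * √(b ^ 2 + c ^ 2) := by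
  rw [← sqrt_mul (by positivity), sq_add_sq_mul_sq_add_sq_eq]
  exact le_sqrt_of_sq_le (le_add_of_nonneg_right (sq_nonneg _))

theorem mul_eq_sq_of_add_mul_eq_sqrt_mul_sqrt {a b c : ℝ}
    (h : (a + b) * c = √(a ^ 2 + c ^ 2) * √(b ^ 2 + c ^ 2)) : a * b = c ^ 2 := by
  have hsq : ((a + b) * c) ^ 2 = (a ^ 2 + c ^ 2) * (b ^ 2 + c ^ 2) := by
    rw [h, mul_pow, sq_sqrt (by positivity), sq_sqrt (by positivity)]
  rw [sq_add_sq_mul_sq_add_sq_eq, left_eq_add, sq_eq_zero_iff, sub_eq_zero] at hsq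
  exact hsq

theorem div_sqrt_sq_add_sq_lt_one (lam : ℝ) {mu : ℝ} (hmu : mu ≠ 0) :
    lam / √(lam ^ 2 + mu ^ 2) < 1 := by
  have hpos : 0 < lam ^ 2 + mu ^ 2 := by positivity
  rw [div_lt_one (sqrt_pos.mpr hpos)]
  exact lt_sqrt_of_sq_lt (lt_add_of_pos_right _ (by positivity))

namespace lhssBound

variable {lam mu : ℝ}

theorem eq_mul_div (α : ℝ) :
    lhssBound lam mu α = lam * √(α ^ 2 + mu ^ 2) / ((α + lam) * mu) :=
  div_mul_div_comm _ _ _ _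

theorem apply_sq_div (hlam : 0 < lam) (hmu : 0 < mu) :
    lhssBound lam mu (mu ^ 2 / lam) = lam / √(lam ^ 2 + mu ^ 2) := by
  have hsqrt : √((mu ^ 2 / lam) ^ 2 + mu ^ 2) = mu / lam * √(lam ^ 2 + mu ^ 2) := by
    rw [← sqrt_sq (div_pos hmu hlam).le, ← sqrt_mul (sq_nonneg _)]
    congr 1
    field_simp
    ring
  rw [lhssBound, hsqrt]
  field_simp
  rw [sq_sqrt (by positivity)]
  ring

theorem div_sqrt_le (hlam : 0 < lam) (hmu : 0 < mu) {α : ℝ} (hα : 0 < α) :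
    lam / √(lam ^ 2 + mu ^ 2) ≤ lhssBound lam mu α := by
  rw [eq_mul_div, div_le_div_iff₀ (sqrt_pos.mpr (by positivity)) (by positivity), mul_assoc]
  exact mul_le_mul_of_nonneg_left (add_mul_le_sqrt_mul_sqrt α lam mu) hlam.le

theorem eq_sq_div_of_eq (hlam : 0 < lam) (hmu : 0 < mu) {α : ℝ} (hα : 0 < α)
    (h : lhssBound lam mu α = lam / √(lam ^ 2 + mu ^ 2)) : α = mu ^ 2 / lam := by
  rw [eq_mul_div, div_eq_div_iff (by positivity) (sqrt_pos.mpr (by positivity)).ne', mul_assoc,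
    mul_right_inj' hlam.ne'] at h
  rw [eq_div_iff hlam.ne', ← mul_eq_sq_of_add_mul_eq_sqrt_mul_sqrt h.symm]

end lhssBound

theorem stmt_3 (lam mu : ℝ) (hlam : 0 < lam) (hmu : 0 < mu) :
    (∀ α : ℝ, 0 < α →
        (lam / (mu ^ 2 / lam + lam)) * (Real.sqrt ((mu ^ 2 / lam) ^ 2 + mu ^ 2) / mu) ≤
          (lam / (α + lam)) * (Real.sqrt (α ^ 2 + mu ^ 2) / mu)) ∧
    (∀ α : ℝ, 0 < α →
        (lam / (α + lam)) * (Real.sqrt (α ^ 2 + mu ^ 2) / mu) =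
          (lam / (mu ^ 2 / lam + lam)) * (Real.sqrt ((mu ^ 2 / lam) ^ 2 + mu ^ 2) / mu) →
        α = mu ^ 2 / lam) ∧
    (lam / (mu ^ 2 / lam + lam)) * (Real.sqrt ((mu ^ 2 / lam) ^ 2 + mu ^ 2) / mu) =
      lam / Real.sqrt (lam ^ 2 + mu ^ 2) ∧
    lam / Real.sqrt (lam ^ 2 + mu ^ 2) < 1 := by
  have hmin : lhssBound lam mu (mu ^ 2 / lam) = lam / √(lam ^ 2 + mu ^ 2) :=
    lhssBound.apply_sq_div hlam hmu
  refine ⟨fun α hα => ?_, fun α hα h => ?_, hmin, div_sqrt_sq_add_sq_lt_one lam hmu.ne'⟩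
  · exact hmin.trans_le (lhssBound.div_sqrt_le hlam hmu hα)
  · exact lhssBound.eq_sq_div_of_eq hlam hmu hα (h.trans hmin)
end

section
/- The function α ↦ σ(α)² = (λ²/μ²)·(α²+μ²)/(α+λ)² (λ, μ > 0 fixed) is strictly decreasing on (0, μ²/λ] and strictly increasing on [μ²/λ, ∞). -/
theorem stmt_4 (lam mu : ℝ) (hlam : 0 < lam) (hmu : 0 < mu) :
    StrictAntiOn (fun α : ℝ => (lam ^ 2 / mu ^ 2) * ((α ^ 2 + mu ^ 2) / (α + lam) ^ 2))
        (Set.Ioc 0 (mu ^ 2 / lam)) ∧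
    StrictMonoOn (fun α : ℝ => (lam ^ 2 / mu ^ 2) * ((α ^ 2 + mu ^ 2) / (α + lam) ^ 2))
        (Set.Ici (mu ^ 2 / lam)) := by
  have hC : 0 < lam ^ 2 / mu ^ 2 := by positivity
  constructor
  · intro x hx y hy hxy
    simp only [Set.mem_Ioc] at hx hy
    have hx0 : 0 < x := hx.1
    have hy0 : 0 < y := lt_trans hx0 hxy
    have hxl : 0 < (x + lam) ^ 2 := by positivity
    have hyl : 0 < (y + lam) ^ 2 := by positivity
    have hyb : lam * y ≤ mu ^ 2 := by
      have := hy.2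
      rw [le_div_iff₀ hlam] at this
      linarith
    have key : (y ^ 2 + mu ^ 2) / (y + lam) ^ 2 < (x ^ 2 + mu ^ 2) / (x + lam) ^ 2 := by
      rw [div_lt_div_iff₀ hyl hxl]
      have hxb : lam * x < mu ^ 2 := by nlinarith
      nlinarith [mul_pos (sub_pos.mpr hxy) (mul_pos (show (0:ℝ) < mu ^ 2 - lam * x by linarith) (show (0:ℝ) < lam + y by linarith)),
        mul_nonneg (sub_pos.mpr hxy).le (mul_nonneg (show (0:ℝ) ≤ mu ^ 2 - lam * y by linarith) (show (0:ℝ) ≤ lam + x by linarith))]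
    have := mul_lt_mul_of_pos_left key hC
    simpa using this
  · intro x hx y hy hxy
    simp only [Set.mem_Ici] at hx hy
    have hx0 : 0 < x := lt_of_lt_of_le (by positivity) hx
    have hy0 : 0 < y := lt_trans hx0 hxy
    have hxl : 0 < (x + lam) ^ 2 := by positivity
    have hyl : 0 < (y + lam) ^ 2 := by positivity
    have hxb : mu ^ 2 ≤ lam * x := by
      rw [div_le_iff₀ hlam] at hx
      linarith
    have key : (x ^ 2 + mu ^ 2) / (x + lam) ^ 2 < (y ^ 2 + mu ^ 2) / (y + lam) ^ 2 := by
      rw [div_lt_div_iff₀ hxl hyl]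
      have hyb : mu ^ 2 < lam * y := by nlinarith
      nlinarith [mul_pos (sub_pos.mpr hxy) (mul_pos (show (0:ℝ) < lam * y - mu ^ 2 by linarith) (show (0:ℝ) < lam + x by linarith)),
        mul_nonneg (sub_pos.mpr hxy).le (mul_nonneg (show (0:ℝ) ≤ lam * x - mu ^ 2 by linarith) (show (0:ℝ) ≤ lam + y by linarith))]
    have := mul_lt_mul_of_pos_left key hC
    simpa using this
end

section
/- Let W be a real symmetric positive definite n×n matrix, T a real symmetric invertible n×n matrix, and α > 0. Then the spectral radius of G(α) = i·T⁻¹W(αI + W)⁻¹(αI − iT) is at most (λ_max/(α+λ_max))·(√(α²+μ_min²)/μ_min), where λ_max is the largest eigenvalue of W and μ_min is the smallest absolute value of an eigenvalue of T. -/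
/-!
If `G v = μ v` with `v ≠ 0`, multiplying by `T` gives `μ • T v = i • P (A v)` with
`P = W (αI + W)⁻¹` and `A = αI - iT`. In an orthonormal eigenbasis of `W`, `P` is diagonal with
entries `λ / (α + λ) ≤ λ_max / (α + λ_max)`; in one of `T`, `A` and `T` are diagonal with
entries `α - iμ_j` and `μ_j`, so `‖A x‖ ≤ √(α² + μ_min²) / μ_min * ‖T x‖`. Hence `‖μ‖ ‖T v‖`
is at most the product of the two bounds times `‖T v‖`, and `T v ≠ 0`.
-/

open Matrix

/-- Spectral radius of a complex matrix: supremum of moduli of its eigenvalues. -/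
noncomputable def specRad {n : ℕ} (M : Matrix (Fin n) (Fin n) ℂ) : ℝ :=
  sSup {r : ℝ | ∃ μ ∈ spectrum ℂ M, r = ‖μ‖}

namespace OrthonormalBasis

variable {𝕜 E ι : Type*} [RCLike 𝕜] [NormedAddCommGroup E] [InnerProductSpace 𝕜 E] [Fintype ι]
  (b : OrthonormalBasis ι 𝕜 E) {f g : E →ₗ[𝕜] E} {c d : ι → 𝕜}

theorem repr_apply_of_apply_eq_smul (hf : ∀ i, f (b i) = c i • b i) (x : E) (i : ι) :
    b.repr (f x) i = c i * b.repr x i := by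
  have : f x = b.repr.symm (WithLp.toLp 2 fun j ↦ c j * b.repr x j) := by
    rw [← b.sum_repr_symm]
    conv_lhs => rw [← b.sum_repr x]
    simp [hf, smul_smul, mul_comm]
  simp [this]

theorem norm_sq_apply_of_apply_eq_smul (hf : ∀ i, f (b i) = c i • b i) (x : E) :
    ‖f x‖ ^ 2 = ∑ i, ‖c i‖ ^ 2 * ‖b.repr x i‖ ^ 2 := by
  rw [← b.repr.norm_map, EuclideanSpace.norm_sq_eq]
  simp [b.repr_apply_of_apply_eq_smul hf, mul_pow]

theorem norm_apply_le_of_apply_eq_smul (hf : ∀ i, f (b i) = c i • b i)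
    (hg : ∀ i, g (b i) = d i • b i) {C : ℝ} (hC : 0 ≤ C) (hcd : ∀ i, ‖c i‖ ≤ C * ‖d i‖)
    (x : E) : ‖f x‖ ≤ C * ‖g x‖ := by
  refine sq_le_sq₀ (norm_nonneg _) (by positivity) |>.mp ?_
  rw [mul_pow, b.norm_sq_apply_of_apply_eq_smul hf, b.norm_sq_apply_of_apply_eq_smul hg,
    Finset.mul_sum]
  refine Finset.sum_le_sum fun i _ ↦ ?_
  rw [← mul_assoc, ← mul_pow C]
  exact mul_le_mul_of_nonneg_right (pow_le_pow_left₀ (norm_nonneg _) (hcd i) 2) (sq_nonneg _)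

end OrthonormalBasis

theorem Matrix.inv_mulVec_eq_inv_smul {n K : Type*} [Fintype n] [DecidableEq n] [Field K]
    {M : Matrix n n K} (hM : IsUnit M) {v : n → K} {c : K} (h : M *ᵥ v = c • v) :
    M⁻¹ *ᵥ v = c⁻¹ • v := by
  have hv : v = c • (M⁻¹ *ᵥ v) := by
    rw [← mulVec_smul, ← h, mulVec_mulVec, nonsing_inv_mul _ ((isUnit_iff_isUnit_det M).mp hM),
      one_mulVec]
  rcases eq_or_ne c 0 with rfl | hc
  · rw [zero_smul] at hv
    simp [hv]
  · conv_rhs => rw [hv]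
    rw [smul_smul, inv_mul_cancel₀ hc, one_smul]

theorem Matrix.toLpLin_apply_eq_smul {n R : Type*} [Fintype n] [DecidableEq n] [CommRing R]
    (p : ENNReal) {M : Matrix n n R} {x : WithLp p (n → R)} {c : R}
    (h : M *ᵥ WithLp.ofLp x = c • WithLp.ofLp x) : toLpLin p p M x = c • x := by
  rw [toLpLin_apply, h]
  rfl

theorem Matrix.spectrum_real_map_ofReal_subset {n : Type*} [Fintype n] [DecidableEq n]
    (M : Matrix n n ℝ) : spectrum ℝ (M.map Complex.ofReal) ⊆ spectrum ℝ M :=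
  AlgHom.spectrum_apply_subset (Complex.ofRealAm.mapMatrix) M

theorem Matrix.PosDef.pos_of_mem_spectrum {n : Type*} [Fintype n] [DecidableEq n]
    {M : Matrix n n ℝ} (hM : M.PosDef) {r : ℝ} (hr : r ∈ spectrum ℝ M) : 0 < r := by
  rw [hM.1.spectrum_real_eq_range_eigenvalues] at hr
  obtain ⟨i, rfl⟩ := hr
  exact hM.eigenvalues_pos i

theorem div_add_le_div_add_of_le {α x y : ℝ} (hα : 0 < α) (hx : 0 ≤ x) (hxy : x ≤ y) :
    x / (α + x) ≤ y / (α + y) := by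
  rw [div_le_div_iff₀ (by linarith) (by linarith)]
  nlinarith

theorem Complex.norm_ofReal_sub_I_mul (a t : ℝ) : ‖(a : ℂ) - I * t‖ = √(a ^ 2 + t ^ 2) := by
  rw [norm_eq_sqrt_sq_add_sq]
  simp

theorem Real.sqrt_sq_add_sq_le_div_mul_abs {a m t : ℝ} (hm : 0 < m) (hmt : m ≤ |t|) :
    √(a ^ 2 + t ^ 2) ≤ √(a ^ 2 + m ^ 2) / m * |t| := by
  have hm2 : m ^ 2 ≤ t ^ 2 := by simpa using pow_le_pow_left₀ hm.le hmt 2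
  rw [← sq_le_sq₀ (by positivity) (by positivity), mul_pow, div_pow, Real.sq_sqrt (by positivity),
    Real.sq_sqrt (by positivity), sq_abs, div_mul_eq_mul_div, le_div_iff₀ (by positivity)]
  nlinarith [mul_le_mul_of_nonneg_left hm2 (sq_nonneg a)]

theorem Module.End.norm_le_mul_of_hasEigenvalue {𝕜 E : Type*} [NormedField 𝕜]
    [NormedAddCommGroup E] [NormedSpace 𝕜 E] {G T P A : Module.End 𝕜 E} {c : 𝕜} {a b : ℝ}
    {μ : 𝕜} (hTG : T * G = c • (P * A)) (hT : Function.Injective T) (ha : 0 ≤ a)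
    (hP : ∀ x, ‖P x‖ ≤ a * ‖x‖) (hA : ∀ x, ‖A x‖ ≤ b * ‖T x‖) (hμ : G.HasEigenvalue μ) :
    ‖μ‖ ≤ ‖c‖ * a * b := by
  obtain ⟨v, hv⟩ := hμ.exists_hasEigenvector
  have hTv : 0 < ‖T v‖ := norm_pos_iff.mpr ((map_ne_zero_iff T hT).mpr hv.2)
  have hμTv : μ • T v = c • P (A v) := by
    rw [← map_smul, ← hv.apply_eq_smul, ← Module.End.mul_apply, hTG]
    rfl
  refine le_of_mul_le_mul_right ?_ hTv
  calc ‖μ‖ * ‖T v‖ = ‖c‖ * ‖P (A v)‖ := by rw [← norm_smul, hμTv, norm_smul]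
    _ ≤ ‖c‖ * (a * (b * ‖T v‖)) := by
      gcongr
      exact (hP _).trans (mul_le_mul_of_nonneg_left (hA v) ha)
    _ = ‖c‖ * a * b * ‖T v‖ := by ring

namespace Matrix.IsHermitian

open Complex

variable {n : Type*} [Fintype n] [DecidableEq n]

theorem norm_toLpLin_mul_inv_smul_one_add_le {H : Matrix n n ℂ} (hH : H.IsHermitian) {α L : ℝ}
    (hα : 0 < α) (hL : 0 ≤ L) (heig : ∀ i, 0 ≤ hH.eigenvalues i ∧ hH.eigenvalues i ≤ L)
    (x : EuclideanSpace ℂ n) :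
    ‖toLpLin 2 2 (H * ((α : ℂ) • 1 + H)⁻¹) x‖ ≤ L / (α + L) * ‖x‖ := by
  set b := hH.eigenvectorBasis
  set lam := hH.eigenvalues
  have hS : IsUnit ((α : ℂ) • 1 + H) := by
    open scoped ComplexOrder in
    exact ((PosDef.one.smul (zero_lt_real.mpr hα)).add_posSemidef
      (hH.posSemidef_iff_eigenvalues_nonneg.mpr fun i ↦ (heig i).1)).isUnit
  have hSb : ∀ i, ((α : ℂ) • 1 + H) *ᵥ ⇑(b i) = ((α + lam i : ℝ) : ℂ) • ⇑(b i) := by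
    intro i
    rw [add_mulVec, smul_mulVec, one_mulVec, hH.mulVec_eigenvectorBasis,
      RCLike.real_smul_eq_coe_smul (K := ℂ), ofReal_add, add_smul]
    rfl
  have hPb : ∀ i, toLpLin 2 2 (H * ((α : ℂ) • 1 + H)⁻¹) (b i)
      = ((lam i / (α + lam i) : ℝ) : ℂ) • b i := by
    intro i
    refine toLpLin_apply_eq_smul _ ?_
    rw [← mulVec_mulVec, inv_mulVec_eq_inv_smul hS (hSb i), mulVec_smul,
      hH.mulVec_eigenvectorBasis, RCLike.real_smul_eq_coe_smul (K := ℂ), smul_smul, ofReal_div,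
      div_eq_inv_mul]
    rfl
  have hbound : ∀ i, ‖((lam i / (α + lam i) : ℝ) : ℂ)‖ ≤ L / (α + L) * ‖(1 : ℂ)‖ := by
    intro i
    obtain ⟨h0, hle⟩ := heig i
    rw [norm_real, Real.norm_of_nonneg (by positivity), norm_one, mul_one]
    exact div_add_le_div_add_of_le hα h0 hle
  simpa using b.norm_apply_le_of_apply_eq_smul hPb (g := LinearMap.id)
    (fun i ↦ (one_smul ℂ _).symm) (by positivity) hbound x

theorem norm_toLpLin_smul_one_sub_I_smul_le {T : Matrix n n ℂ} (hT : T.IsHermitian) (α : ℝ)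
    {m : ℝ} (hm : 0 < m) (heig : ∀ i, m ≤ |hT.eigenvalues i|) (x : EuclideanSpace ℂ n) :
    ‖toLpLin 2 2 ((α : ℂ) • 1 - I • T) x‖ ≤ √(α ^ 2 + m ^ 2) / m * ‖toLpLin 2 2 T x‖ := by
  set b := hT.eigenvectorBasis
  set mu := hT.eigenvalues
  have hTb : ∀ i, toLpLin 2 2 T (b i) = (mu i : ℂ) • b i := by
    intro i
    refine toLpLin_apply_eq_smul _ ?_
    rw [hT.mulVec_eigenvectorBasis, RCLike.real_smul_eq_coe_smul (K := ℂ)]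
    rfl
  have hAb : ∀ i, toLpLin 2 2 ((α : ℂ) • 1 - I • T) (b i) = ((α : ℂ) - I * mu i) • b i := by
    intro i
    refine toLpLin_apply_eq_smul _ ?_
    rw [sub_mulVec, smul_mulVec, one_mulVec, smul_mulVec, hT.mulVec_eigenvectorBasis,
      RCLike.real_smul_eq_coe_smul (K := ℂ), smul_smul, sub_smul]
    rfl
  have hbound : ∀ i, ‖(α : ℂ) - I * mu i‖ ≤ √(α ^ 2 + m ^ 2) / m * ‖(mu i : ℂ)‖ := fun i ↦ by
    rw [norm_ofReal_sub_I_mul, norm_real, Real.norm_eq_abs]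
    exact Real.sqrt_sq_add_sq_le_div_mul_abs hm (heig i)
  exact b.norm_apply_le_of_apply_eq_smul hAb hTb (by positivity) hbound x

end Matrix.IsHermitian

theorem Matrix.norm_le_of_mem_spectrum_smul_inv_mul_mul {𝕜 n : Type*} [RCLike 𝕜] [Fintype n]
    [DecidableEq n] {T P A : Matrix n n 𝕜} {c μ : 𝕜} {a b : ℝ} (hT : IsUnit T) (ha : 0 ≤ a)
    (hP : ∀ x, ‖toLpLin 2 2 P x‖ ≤ a * ‖x‖) (hA : ∀ x, ‖toLpLin 2 2 A x‖ ≤ b * ‖toLpLin 2 2 T x‖)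
    (hμ : μ ∈ spectrum 𝕜 (c • (T⁻¹ * P * A))) : ‖μ‖ ≤ ‖c‖ * a * b := by
  have hTG : T * (c • (T⁻¹ * P * A)) = c • (P * A) := by
    rw [Matrix.mul_smul, Matrix.mul_assoc,
      mul_nonsing_inv_cancel_left _ _ ((isUnit_iff_isUnit_det T).mp hT)]
  rw [← AlgEquiv.spectrum_eq (toLpLinAlgEquiv 2), ← Module.End.hasEigenvalue_iff_mem_spectrum] at hμ
  exact Module.End.norm_le_mul_of_hasEigenvalue (P := toLpLinAlgEquiv 2 P)
    (A := toLpLinAlgEquiv 2 A) (by rw [← map_mul, ← map_mul, ← map_smul, hTG])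
    ((Module.End.isUnit_iff _).mp (hT.map (toLpLinAlgEquiv 2))).1 ha hP hA hμ

theorem stmt_5 {n : ℕ} (W T : Matrix (Fin n) (Fin n) ℝ)
    (hW : W.PosDef) (hT : T.IsSymm) (hTinv : IsUnit T)
    (α : ℝ) (hα : 0 < α)
    (lamMax muMin : ℝ)
    (hlam_mem : lamMax ∈ spectrum ℝ W)
    (hlam_max : ∀ x ∈ spectrum ℝ W, x ≤ lamMax)
    (hmu_mem : ∃ x ∈ spectrum ℝ T, |x| = muMin)
    (hmu_min : ∀ x ∈ spectrum ℝ T, muMin ≤ |x|) :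
    specRad (Complex.I •
        ((T.map Complex.ofReal)⁻¹ * (W.map Complex.ofReal) *
          ((α : ℂ) • (1 : Matrix (Fin n) (Fin n) ℂ) + W.map Complex.ofReal)⁻¹ *
          ((α : ℂ) • (1 : Matrix (Fin n) (Fin n) ℂ) -
            Complex.I • T.map Complex.ofReal)))
      ≤ (lamMax / (α + lamMax)) * (Real.sqrt (α ^ 2 + muMin ^ 2) / muMin) := by
  have hW' : (W.map Complex.ofReal).IsHermitian := hW.1.map _ fun _ ↦ by simp
  have hT' : (T.map Complex.ofReal).IsHermitian :=
    (isHermitian_iff_isSymm.mpr hT).map _ fun _ ↦ by simp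
  have hlam : 0 < lamMax := hW.pos_of_mem_spectrum hlam_mem
  have hmu : 0 < muMin := by
    obtain ⟨x, hx, rfl⟩ := hmu_mem
    exact abs_pos.mpr (ne_of_mem_of_not_mem hx (spectrum.zero_notMem ℝ hTinv))
  have hP := hW'.norm_toLpLin_mul_inv_smul_one_add_le hα hlam.le fun i ↦
    have h := W.spectrum_real_map_ofReal_subset (hW'.eigenvalues_mem_spectrum_real i)
    ⟨(hW.pos_of_mem_spectrum h).le, hlam_max _ h⟩
  have hA := hT'.norm_toLpLin_smul_one_sub_I_smul_le α hmu fun i ↦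
    hmu_min _ (T.spectrum_real_map_ofReal_subset (hT'.eigenvalues_mem_spectrum_real i))
  refine Real.sSup_le ?_ (by positivity)
  rintro _ ⟨μ, hμ, rfl⟩
  rw [Matrix.mul_assoc (T.map Complex.ofReal)⁻¹] at hμ
  simpa only [Complex.norm_I, one_mul] using norm_le_of_mem_spectrum_smul_inv_mul_mul
    (hTinv.map Complex.ofRealHom.mapMatrix) (by positivity) hP hA hμ
end

section
/- Let W be real symmetric positive definite and T real symmetric invertible, with λ_max the largest eigenvalue of W and μ_min the smallest modulus of an eigenvalue of T. If λ_max ≤ μ_min, then for every α > 0 the spectral radius of the LHSS iteration matrix G(α) = i·T⁻¹W(αI+W)⁻¹(αI−iT) is strictly less than 1. -/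
/-!
If `G(α) v = μ v` with `v ≠ 0`, then `u = T v` satisfies `μ (u + α W⁻¹ u) = u + i α T⁻¹ u`,
because `I + α W⁻¹` inverts `W (αI + W)⁻¹`. Pairing with `u` gives `μ (N + α s) = N + i α q` with
`N = ‖u‖²`, `s = u* W⁻¹ u ≥ N / λ_max` and `|q| = |u* T⁻¹ u| ≤ N / μ_min ≤ N / λ_max ≤ s`.
Hence `|μ|² (N + α s)² = N² + α² q² ≤ N² + α² s² < (N + α s)²`.
-/

open Matrix

lemma specRad_lt_one_of_forall_norm_lt_one {n : ℕ} {M : Matrix (Fin n) (Fin n) ℂ}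
    (h : ∀ μ ∈ spectrum ℂ M, ‖μ‖ < 1) : specRad M < 1 := by
  have hset : {r : ℝ | ∃ μ ∈ spectrum ℂ M, r = ‖μ‖} = (‖·‖) '' spectrum ℂ M := by
    ext; simp [eq_comm]
  rw [specRad, hset]
  rcases (spectrum ℂ M).eq_empty_or_nonempty with hempty | hne
  · simp [hempty]
  · obtain ⟨μ, hμ, hr⟩ := (hne.image (‖·‖)).csSup_mem ((finite_spectrum M).image (‖·‖))
    exact hr ▸ h μ hμ

open Complex
open scoped ComplexOrder

lemma isUnit_algebraMap_add_of_spectrum_pos {A : Type*} [Ring A] [Algebra ℝ A] {a : A}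
    (ha : ∀ x ∈ spectrum ℝ a, 0 < x) {r : ℝ} (hr : 0 ≤ r) : IsUnit (algebraMap ℝ A r + a) := by
  refine (spectrum.zero_notMem_iff ℝ).1 fun h ↦ ?_
  have := ha (-r) ((spectrum.add_mem_add_iff (s := r)).1 (by rwa [neg_add_cancel]))
  linarith

lemma Complex.norm_lt_one_of_mul_eq {μ : ℂ} {α N s q : ℝ} (hα : 0 < α) (hN : 0 < N)
    (hs : 0 < s) (hq : |q| ≤ s) (h : μ * (N + α * s) = N + α * q * I) : ‖μ‖ < 1 := by
  have hnormSq : normSq μ * (N + α * s) ^ 2 = N ^ 2 + (α * q) ^ 2 := by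
    have := congrArg normSq h
    push_cast [← ofReal_mul, ← ofReal_add] at this
    rwa [normSq_mul, normSq_ofReal, normSq_add_mul_I, ← sq] at this
  have hq2 : q ^ 2 ≤ s ^ 2 := sq_le_sq' (abs_le.1 hq).1 (abs_le.1 hq).2
  have : normSq μ < 1 := by
    nlinarith [mul_pos hN (mul_pos hα hs), mul_le_mul_of_nonneg_left hq2 (sq_nonneg α)]
  rwa [normSq_eq_norm_sq, sq_lt_one_iff₀ (norm_nonneg μ)] at this

namespace Matrix

lemma IsHermitian.map_ofReal {n : Type*} {M : Matrix n n ℝ} (hM : M.IsHermitian) :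
    (M.map ofReal).IsHermitian :=
  hM.map ofReal fun _ ↦ by simp

variable {n : Type*} [Fintype n]

section RCLike

variable {𝕜 : Type*} [RCLike 𝕜]

lemma IsHermitian.coe_re_dotProduct_mulVec {A : Matrix n n 𝕜} (hA : A.IsHermitian) (u : n → 𝕜) :
    (RCLike.re (star u ⬝ᵥ A *ᵥ u) : 𝕜) = star u ⬝ᵥ A *ᵥ u :=
  RCLike.ext (by simp) (by simp [hA.im_star_dotProduct_mulVec_self u])

variable [DecidableEq n]

lemma PosDef.pos_of_mem_spectrum_s6 {W : Matrix n n 𝕜} (hW : W.PosDef) {x : ℝ}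
    (hx : x ∈ spectrum ℝ W) : 0 < x := by
  rw [hW.isHermitian.spectrum_real_eq_range_eigenvalues] at hx
  obtain ⟨j, rfl⟩ := hx
  exact hW.eigenvalues_pos j

lemma inv_mem_spectrum_of_mem_spectrum_inv {A : Matrix n n 𝕜} (hA : IsUnit A) {x : ℝ}
    (hx : x ∈ spectrum ℝ A⁻¹) : x⁻¹ ∈ spectrum ℝ A := by
  obtain ⟨U, rfl⟩ := hA
  rw [← coe_units_inv] at hx
  exact spectrum.inv₀_mem_iff.2 hx

open scoped MatrixOrder in
lemma IsHermitian.le_re_dotProduct_mulVec {A : Matrix n n 𝕜} (hA : A.IsHermitian) {r : ℝ}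
    (hr : ∀ x ∈ spectrum ℝ A, r ≤ x) (u : n → 𝕜) :
    r * RCLike.re (star u ⬝ᵥ u) ≤ RCLike.re (star u ⬝ᵥ A *ᵥ u) := by
  have h := (algebraMap_le_iff_le_spectrum hA.isSelfAdjoint).2 hr
  simpa [Algebra.algebraMap_eq_smul_one, sub_mulVec, smul_mulVec, dotProduct_sub, RCLike.smul_re]
    using (RCLike.nonneg_iff.1 ((le_iff.1 h).dotProduct_mulVec_nonneg u)).1

open scoped MatrixOrder in
lemma IsHermitian.abs_re_dotProduct_mulVec_le {A : Matrix n n 𝕜} (hA : A.IsHermitian) {r : ℝ}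
    (hr : ∀ x ∈ spectrum ℝ A, |x| ≤ r) (u : n → 𝕜) :
    |RCLike.re (star u ⬝ᵥ A *ᵥ u)| ≤ r * RCLike.re (star u ⬝ᵥ u) := by
  have lower := hA.le_re_dotProduct_mulVec (r := -r) (fun x hx ↦ neg_le_of_abs_le (hr x hx)) u
  have h := (le_algebraMap_iff_spectrum_le hA.isSelfAdjoint).2 fun x hx ↦ le_of_abs_le (hr x hx)
  have upper : RCLike.re (star u ⬝ᵥ A *ᵥ u) ≤ r * RCLike.re (star u ⬝ᵥ u) := by
    simpa [Algebra.algebraMap_eq_smul_one, sub_mulVec, smul_mulVec, dotProduct_sub,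
      RCLike.smul_re] using (RCLike.nonneg_iff.1 ((le_iff.1 h).dotProduct_mulVec_nonneg u)).1
  exact abs_le.2 ⟨by linarith, upper⟩

end RCLike

variable [DecidableEq n]

lemma exists_mulVec_eq_smul_of_mem_spectrum {K : Type*} [Field K] {M : Matrix n n K} {μ : K}
    (hμ : μ ∈ spectrum K M) : ∃ v ≠ 0, M *ᵥ v = μ • v := by
  rw [← spectrum_toLin'] at hμ
  obtain ⟨v, hv, hv0⟩ := (Module.End.HasEigenvalue.of_mem_spectrum hμ).exists_hasEigenvector
  exact ⟨v, hv0, by simpa using hv⟩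

lemma one_add_smul_inv_mul_mul_smul_one_add_inv {K : Type*} [Field K] (a : K)
    {A : Matrix n n K} (hA : IsUnit A) (hC : IsUnit (a • 1 + A)) :
    (1 + a • A⁻¹) * (A * (a • 1 + A)⁻¹) = 1 := by
  have hA' := (isUnit_iff_isUnit_det A).1 hA
  have hleft : 1 + a • A⁻¹ = A⁻¹ * (a • 1 + A) := by
    rw [Matrix.mul_add, Matrix.mul_smul, mul_one, nonsing_inv_mul _ hA', add_comm]
  have hcomm : (a • 1 + A) * A = A * (a • 1 + A) := by
    simp [Matrix.add_mul, Matrix.mul_add]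
  rw [hleft, ← mul_assoc, mul_assoc A⁻¹, hcomm, ← mul_assoc, nonsing_inv_mul _ hA', one_mul,
    mul_nonsing_inv _ ((isUnit_iff_isUnit_det _).1 hC)]

lemma mem_spectrum_of_mem_spectrum_map_ofReal {M : Matrix n n ℝ} {x : ℝ}
    (hx : x ∈ spectrum ℝ (M.map ofReal)) : x ∈ spectrum ℝ M :=
  AlgHom.spectrum_apply_subset ofRealAm.mapMatrix M hx

end Matrix

section LHSS

variable {n : Type*} [Fintype n] [DecidableEq n]

/-- The iteration matrix `G(α)` of the LHSS method for `(W + i T) x = b`. -/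
noncomputable def lhssIterationMatrix (W T : Matrix n n ℂ) (α : ℝ) : Matrix n n ℂ :=
  I • (T⁻¹ * W * ((α : ℂ) • 1 + W)⁻¹ * ((α : ℂ) • 1 - I • T))

lemma exists_smul_add_inv_mulVec_eq_of_mem_spectrum_lhssIterationMatrix {W T : Matrix n n ℂ}
    {α : ℝ} {μ : ℂ} (hWu : IsUnit W) (hTu : IsUnit T) (hCu : IsUnit ((α : ℂ) • 1 + W))
    (hμ : μ ∈ spectrum ℂ (lhssIterationMatrix W T α)) :
    ∃ u ≠ 0, μ • (u + (α : ℂ) • W⁻¹ *ᵥ u) = u + (I * α) • T⁻¹ *ᵥ u := by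
  obtain ⟨v, hv0, hv⟩ := exists_mulVec_eq_smul_of_mem_spectrum hμ
  have hT' := (isUnit_iff_isUnit_det T).1 hTu
  have hv_eq : T⁻¹ *ᵥ (T *ᵥ v) = v := by rw [mulVec_mulVec, nonsing_inv_mul _ hT', one_mulVec]
  refine ⟨T *ᵥ v, fun h ↦ hv0 (by rw [← hv_eq, h, mulVec_zero]), ?_⟩
  have hG : lhssIterationMatrix W T α
      = T⁻¹ * (W * ((α : ℂ) • 1 + W)⁻¹) * ((I * α) • 1 + T) := by
    rw [lhssIterationMatrix, ← Matrix.mul_smul, smul_sub, smul_smul, smul_smul, I_mul_I,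
      neg_one_smul, sub_neg_eq_add, mul_assoc T⁻¹]
  have hP : (1 + (α : ℂ) • W⁻¹) * T * (T⁻¹ * (W * ((α : ℂ) • 1 + W)⁻¹) * ((I * α) • 1 + T))
      = (I * α) • 1 + T := by
    rw [mul_assoc, ← mul_assoc T, ← mul_assoc T, mul_nonsing_inv _ hT', one_mul, ← mul_assoc,
      one_add_smul_inv_mul_mul_smul_one_add_inv _ hWu hCu, one_mul]
  have := congrArg (((1 + (α : ℂ) • W⁻¹) * T) *ᵥ ·) hv
  simp only [mulVec_mulVec, hG, hP] at this
  rw [add_mulVec, smul_mulVec, one_mulVec, mulVec_smul, ← mulVec_mulVec, add_mulVec,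
    one_mulVec, smul_mulVec] at this
  rw [hv_eq, ← this, add_comm]

theorem norm_lt_one_of_mem_spectrum_lhssIterationMatrix {W T : Matrix n n ℂ} {α lam m : ℝ}
    {μ : ℂ} (hW : W.IsHermitian) (hT : T.IsHermitian) (hW_pos : ∀ x ∈ spectrum ℝ W, 0 < x)
    (hW_le : ∀ x ∈ spectrum ℝ W, x ≤ lam) (hT_ge : ∀ x ∈ spectrum ℝ T, m ≤ |x|)
    (hα : 0 < α) (hlam : 0 < lam) (hlm : lam ≤ m)
    (hμ : μ ∈ spectrum ℂ (lhssIterationMatrix W T α)) :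
    ‖μ‖ < 1 := by
  have hm : 0 < m := hlam.trans_le hlm
  have hWu : IsUnit W := by
    simpa using isUnit_algebraMap_add_of_spectrum_pos hW_pos le_rfl
  have hTu : IsUnit T :=
    (spectrum.zero_notMem_iff ℝ).1 fun h ↦ by simpa using hm.trans_le (hT_ge 0 h)
  have hCu : IsUnit ((α : ℂ) • 1 + W) := by
    simpa [Algebra.algebraMap_eq_smul_one] using isUnit_algebraMap_add_of_spectrum_pos hW_pos hα.le
  obtain ⟨u, hu0, heig⟩ :=
    exists_smul_add_inv_mulVec_eq_of_mem_spectrum_lhssIterationMatrix hWu hTu hCu hμ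
  have hs : lam⁻¹ * RCLike.re (star u ⬝ᵥ u) ≤ RCLike.re (star u ⬝ᵥ W⁻¹ *ᵥ u) := by
    refine hW.inv.le_re_dotProduct_mulVec (fun x hx ↦ ?_) u
    have hx' := inv_mem_spectrum_of_mem_spectrum_inv hWu hx
    simpa using inv_anti₀ (hW_pos _ hx') (hW_le _ hx')
  have hq : |RCLike.re (star u ⬝ᵥ T⁻¹ *ᵥ u)| ≤ m⁻¹ * RCLike.re (star u ⬝ᵥ u) := by
    refine hT.inv.abs_re_dotProduct_mulVec_le (fun x hx ↦ ?_) u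
    rcases eq_or_ne x 0 with rfl | hx0
    · simpa using hm.le
    · have := hT_ge _ (inv_mem_spectrum_of_mem_spectrum_inv hTu hx)
      rw [abs_inv] at this
      exact (le_inv_comm₀ hm (abs_pos.2 hx0)).1 this
  have hN : 0 < RCLike.re (star u ⬝ᵥ u) :=
    (RCLike.pos_iff.1 (dotProduct_star_self_pos_iff.2 hu0)).1
  have hq_le_s := hq.trans ((mul_le_mul_of_nonneg_right (inv_anti₀ hlam hlm) hN.le).trans hs)
  have hdot := congrArg (star u ⬝ᵥ ·) heig
  simp only [dotProduct_smul, dotProduct_add, smul_eq_mul] at hdot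
  have hNc := isHermitian_one.coe_re_dotProduct_mulVec u
  rw [one_mulVec] at hNc
  rw [← hNc, ← hW.inv.coe_re_dotProduct_mulVec, ← hT.inv.coe_re_dotProduct_mulVec] at hdot
  exact norm_lt_one_of_mul_eq hα hN ((mul_pos (inv_pos.2 hlam) hN).trans_le hs) hq_le_s
    (by linear_combination hdot)

end LHSS

theorem stmt_6_general {n : ℕ} (W T : Matrix (Fin n) (Fin n) ℝ)
    (hW : W.PosDef) (hT : T.IsSymm)
    (lamMax muMin : ℝ)
    (hlam_mem : lamMax ∈ spectrum ℝ W)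
    (hlam_max : ∀ x ∈ spectrum ℝ W, x ≤ lamMax)
    (hmu_min : ∀ x ∈ spectrum ℝ T, muMin ≤ |x|)
    (hle : lamMax ≤ muMin) :
    ∀ α : ℝ, 0 < α →
      specRad (Complex.I •
          ((T.map Complex.ofReal)⁻¹ * (W.map Complex.ofReal) *
            ((α : ℂ) • (1 : Matrix (Fin n) (Fin n) ℂ) + W.map Complex.ofReal)⁻¹ *
            ((α : ℂ) • (1 : Matrix (Fin n) (Fin n) ℂ) -
              Complex.I • T.map Complex.ofReal))) < 1 := by
  intro α hα
  refine specRad_lt_one_of_forall_norm_lt_one fun μ hμ ↦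
    norm_lt_one_of_mem_spectrum_lhssIterationMatrix hW.isHermitian.map_ofReal
      (isHermitian_iff_isSymm.2 hT).map_ofReal
      (fun x hx ↦ hW.pos_of_mem_spectrum_s6 (mem_spectrum_of_mem_spectrum_map_ofReal hx))
      (fun x hx ↦ hlam_max x (mem_spectrum_of_mem_spectrum_map_ofReal hx))
      (fun x hx ↦ hmu_min x (mem_spectrum_of_mem_spectrum_map_ofReal hx))
      hα (hW.pos_of_mem_spectrum_s6 hlam_mem) hle hμ

theorem stmt_6 {n : ℕ} (W T : Matrix (Fin n) (Fin n) ℝ)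
    (hW : W.PosDef) (hT : T.IsSymm) (hTinv : IsUnit T)
    (lamMax muMin : ℝ)
    (hlam_mem : lamMax ∈ spectrum ℝ W)
    (hlam_max : ∀ x ∈ spectrum ℝ W, x ≤ lamMax)
    (hmu_mem : ∃ x ∈ spectrum ℝ T, |x| = muMin)
    (hmu_min : ∀ x ∈ spectrum ℝ T, muMin ≤ |x|)
    (hle : lamMax ≤ muMin) :
    ∀ α : ℝ, 0 < α →
      specRad (Complex.I •
          ((T.map Complex.ofReal)⁻¹ * (W.map Complex.ofReal) *
            ((α : ℂ) • (1 : Matrix (Fin n) (Fin n) ℂ) + W.map Complex.ofReal)⁻¹ *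
            ((α : ℂ) • (1 : Matrix (Fin n) (Fin n) ℂ) -
              Complex.I • T.map Complex.ofReal))) < 1 :=
  stmt_6_general W T hW hT lamMax muMin hlam_mem hlam_max hmu_min hle
end

section
/- Let T be a real symmetric invertible n×n matrix and α > 0. Then ‖(αI − iT)T⁻¹‖₂ = √(α² + μ_min²)/μ_min, where μ_min is the smallest absolute value of an eigenvalue of T. -/
/-!
Let `M` be `T` viewed as a complex matrix. Then `(αI - iM)M⁻¹ = f(M)` for `f z = (α - iz)/z`,
and since `M` is self-adjoint the continuous functional calculus is isometric, so the norm is the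
maximum of `|f t| = √(α² + t²)/|t|` over the real spectrum of `T`. This decreases in `|t|`, hence
the maximum is attained where `|t| = μ_min`.
-/

open Matrix

/-- Spectral (operator 2-) norm of a complex matrix. -/
noncomputable def spec2Norm {n : ℕ} (M : Matrix (Fin n) (Fin n) ℂ) : ℝ :=
  ‖Matrix.toEuclideanCLM (𝕜 := ℂ) M‖

open scoped Matrix.Norms.L2Operator

theorem Matrix.spectrum_map_algebraMap {ι K L : Type*} [Fintype ι] [DecidableEq ι] [Field K]
    [Field L] [Algebra K L] (M : Matrix ι ι K) :
    spectrum K (M.map (algebraMap K L)) = spectrum K M := by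
  ext x
  have hmap : algebraMap K (Matrix ι ι L) x - M.map (algebraMap K L)
      = (algebraMap K L).mapMatrix (algebraMap K (Matrix ι ι K) x - M) := by
    ext i j
    simp [Matrix.algebraMap_matrix_apply, apply_ite]
  rw [spectrum.mem_iff, spectrum.mem_iff, hmap, Matrix.isUnit_iff_isUnit_det,
    Matrix.isUnit_iff_isUnit_det, ← RingHom.map_det, isUnit_iff_ne_zero, isUnit_iff_ne_zero,
    map_ne_zero]

theorem norm_ofReal_sub_I_mul_div (α t : ℝ) :
    ‖((α : ℂ) - Complex.I * t) / t‖ = √(α ^ 2 + t ^ 2) / |t| := by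
  rw [norm_div, Complex.norm_real, Real.norm_eq_abs,
    show (α : ℂ) - Complex.I * t = α + ((-t : ℝ) : ℂ) * Complex.I by push_cast; ring,
    Complex.norm_add_mul_I, neg_sq]

theorem sqrt_sq_add_sq_div_le {α m s : ℝ} (hm : 0 < m) (hms : m ≤ s) :
    √(α ^ 2 + s ^ 2) / s ≤ √(α ^ 2 + m ^ 2) / m := by
  have hs : 0 < s := hm.trans_le hms
  have hsqrt_mul (x : ℝ) {y : ℝ} (hy : 0 < y) : √x * y = √(x * y ^ 2) := by
    rw [Real.sqrt_mul' _ (sq_nonneg y), Real.sqrt_sq hy.le]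
  rw [div_le_div_iff₀ hs hm, hsqrt_mul _ hm, hsqrt_mul _ hs]
  exact Real.sqrt_le_sqrt (by nlinarith [mul_le_mul hms hms hm.le hs.le, sq_nonneg α])

theorem nontrivial_of_mem_spectrum {R A : Type*} [CommSemiring R] [Ring A] [Algebra R A]
    {a : A} {r : R} (h : r ∈ spectrum R a) : Nontrivial A := by
  by_contra hA
  rw [not_nontrivial_iff_subsingleton] at hA
  simp [spectrum.of_subsingleton] at h

theorem isGreatest_image_sqrt_sq_add_sq_div_abs {S : Set ℝ} (hS : 0 ∉ S) (α : ℝ) {m : ℝ}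
    (hm_mem : ∃ x ∈ S, |x| = m) (hm_min : ∀ x ∈ S, m ≤ |x|) :
    IsGreatest ((fun t ↦ √(α ^ 2 + t ^ 2) / |t|) '' S) (√(α ^ 2 + m ^ 2) / m) := by
  obtain ⟨x, hxS, rfl⟩ := hm_mem
  have hx : 0 < |x| := abs_pos.mpr fun h ↦ hS (h ▸ hxS)
  refine ⟨⟨x, hxS, by rw [sq_abs]⟩, ?_⟩
  rintro _ ⟨t, htS, rfl⟩
  dsimp only
  rw [← sq_abs t]
  exact sqrt_sq_add_sq_div_le hx (hm_min t htS)

section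
variable {A : Type*} [CStarAlgebra A]

theorem cfc_sub_I_mul_div_id {a : A} [IsStarNormal a] (ha : IsUnit a) (c : ℂ) :
    cfc (fun z : ℂ ↦ (c - Complex.I * z) / z) a = (c • 1 - Complex.I • a) * Ring.inverse a := by
  have h0 : ∀ z ∈ spectrum ℂ a, id z ≠ 0 := fun z hz h ↦ spectrum.zero_notMem ℂ ha (h ▸ hz)
  change cfc (fun z : ℂ ↦ (c - Complex.I * z) / id z) a = _
  rw [cfc_map_div _ id a h0, cfc_id ℂ a, cfc_sub .., cfc_const c a, cfc_const_mul_id Complex.I a,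
    Algebra.algebraMap_eq_smul_one]

theorem IsSelfAdjoint.norm_smul_one_sub_I_smul_mul_inverse {a : A} (ha : IsSelfAdjoint a)
    (ha_unit : IsUnit a) (α : ℝ) {m : ℝ} (hm_mem : ∃ x ∈ spectrum ℝ a, |x| = m)
    (hm_min : ∀ x ∈ spectrum ℝ a, m ≤ |x|) :
    ‖((α : ℂ) • 1 - Complex.I • a) * Ring.inverse a‖ = √(α ^ 2 + m ^ 2) / m := by
  have : Nontrivial A := let ⟨_, hx, _⟩ := hm_mem; nontrivial_of_mem_spectrum hx
  have := ha.isStarNormal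
  have h0 : (0 : ℂ) ∉ spectrum ℂ a := spectrum.zero_notMem ℂ ha_unit
  have hcont : ContinuousOn (fun z : ℂ ↦ ((α : ℂ) - Complex.I * z) / z) (spectrum ℂ a) :=
    (continuousOn_const.sub (continuousOn_const.mul continuousOn_id)).div continuousOn_id
      fun z hz h ↦ h0 (h ▸ hz)
  have hnorm := IsGreatest.norm_cfc _ a hcont
  rw [cfc_sub_I_mul_div_id ha_unit, ← ha.spectrumRestricts.algebraMap_image,
    Set.image_image] at hnorm
  simp only [Complex.coe_algebraMap, norm_ofReal_sub_I_mul_div] at hnorm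
  exact hnorm.unique <|
    isGreatest_image_sqrt_sq_add_sq_div_abs (spectrum.zero_notMem ℝ ha_unit) α hm_mem hm_min

end

theorem stmt_7_general {n : ℕ} (T : Matrix (Fin n) (Fin n) ℝ)
    (hT : T.IsSymm) (hTinv : IsUnit T)
    (α : ℝ)
    (muMin : ℝ)
    (hmu_mem : ∃ x ∈ spectrum ℝ T, |x| = muMin)
    (hmu_min : ∀ x ∈ spectrum ℝ T, muMin ≤ |x|) :
    spec2Norm (((α : ℂ) • (1 : Matrix (Fin n) (Fin n) ℂ) -
        Complex.I • T.map Complex.ofReal) * (T.map Complex.ofReal)⁻¹)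
      = Real.sqrt (α ^ 2 + muMin ^ 2) / muMin := by
  have hspec : spectrum ℝ (T.map Complex.ofReal) = spectrum ℝ T := by
    rw [← Complex.coe_algebraMap]
    exact T.spectrum_map_algebraMap
  have hsa : IsSelfAdjoint (T.map Complex.ofReal) :=
    (isHermitian_iff_isSymm.mpr hT).map _ fun _ ↦ (Complex.conj_ofReal _).symm
  have hunit : IsUnit (T.map Complex.ofReal) := hTinv.map Complex.ofRealHom.mapMatrix
  rw [spec2Norm, ← cstar_norm_def, nonsing_inv_eq_ringInverse]
  exact hsa.norm_smul_one_sub_I_smul_mul_inverse hunit α (hspec ▸ hmu_mem) (hspec ▸ hmu_min)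

theorem stmt_7 {n : ℕ} (T : Matrix (Fin n) (Fin n) ℝ)
    (hT : T.IsSymm) (hTinv : IsUnit T)
    (α : ℝ) (hα : 0 < α)
    (muMin : ℝ)
    (hmu_mem : ∃ x ∈ spectrum ℝ T, |x| = muMin)
    (hmu_min : ∀ x ∈ spectrum ℝ T, muMin ≤ |x|) :
    spec2Norm (((α : ℂ) • (1 : Matrix (Fin n) (Fin n) ℂ) -
        Complex.I • T.map Complex.ofReal) * (T.map Complex.ofReal)⁻¹)
      = Real.sqrt (α ^ 2 + muMin ^ 2) / muMin :=
  stmt_7_general T hT hTinv α muMin hmu_mem hmu_min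
end

section
/- Let ξ_max ≠ 0 be real and define r(α) = √(α²ξ_max² + 1)/(α+1) for α > 0. If |ξ_max| ≤ 1, then r(α) < 1 for all α > 0; if |ξ_max| > 1, then r(α) < 1 if and only if 0 < α < 2/(ξ_max² − 1). -/
theorem stmt_10 (ξ : ℝ) (hξ : ξ ≠ 0) :
    (|ξ| ≤ 1 → ∀ α : ℝ, 0 < α → Real.sqrt (α ^ 2 * ξ ^ 2 + 1) / (α + 1) < 1) ∧
    (|ξ| > 1 → ∀ α : ℝ, 0 < α →
      (Real.sqrt (α ^ 2 * ξ ^ 2 + 1) / (α + 1) < 1 ↔ α < 2 / (ξ ^ 2 - 1))) := by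
  have key : ∀ α : ℝ, 0 < α →
      (Real.sqrt (α ^ 2 * ξ ^ 2 + 1) / (α + 1) < 1 ↔ α * (ξ ^ 2 - 1) < 2) := by
    intro α hα
    have h1 : (0:ℝ) < α + 1 := by linarith
    rw [div_lt_one h1, Real.sqrt_lt' h1]
    constructor <;> intro h <;> nlinarith
  constructor
  · intro hle α hα
    rw [key α hα]
    have h2 : ξ ^ 2 ≤ 1 := by nlinarith [abs_nonneg ξ, sq_abs ξ]
    nlinarith
  · intro hgt α hα
    rw [key α hα]
    have h2 : (0:ℝ) < ξ ^ 2 - 1 := by nlinarith [sq_abs ξ, abs_nonneg ξ]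
    rw [lt_div_iff₀ h2]
end

section
/- Let ξ⁻ ∈ (−1, 0) and α > −2ξ⁻/(1 − (ξ⁻)²). Then for every real ξ with ξ⁻ ≤ ξ < 0, one has (1+α²)ξ² < (α+ξ)², i.e. √(1+α²)|ξ|/|α+ξ| < 1. -/
theorem stmt_14 (ξm α : ℝ) (hξm : ξm ∈ Set.Ioo (-1 : ℝ) 0)
    (hα : α > -2 * ξm / (1 - ξm ^ 2)) :
    ∀ ξ : ℝ, ξm ≤ ξ → ξ < 0 →
      (1 + α ^ 2) * ξ ^ 2 < (α + ξ) ^ 2 ∧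
        Real.sqrt (1 + α ^ 2) * |ξ| / |α + ξ| < 1 := by
  obtain ⟨hm1, hm0⟩ := hξm
  have hd : 0 < 1 - ξm ^ 2 := by nlinarith
  have hA : -2 * ξm < α * (1 - ξm ^ 2) := (div_lt_iff₀ hd).mp hα
  have hαpos : 0 < α := by nlinarith
  intro ξ h1 h2
  have hξ1 : -1 < ξ := lt_of_lt_of_le hm1 h1
  have hd2 : 0 < 1 - ξ ^ 2 := by nlinarith
  have hprod : 0 ≤ (ξ - ξm) * (ξ * ξm + 1) := by
    have : 0 ≤ ξ * ξm := by nlinarith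
    have h3 : 0 ≤ ξ - ξm := by linarith
    nlinarith
  have hB : 0 < α * (1 - ξ ^ 2) + 2 * ξ := by
    nlinarith [mul_pos hd2 (show 0 < α * (1 - ξm ^ 2) + 2 * ξm by linarith)]
  have hmain : (1 + α ^ 2) * ξ ^ 2 < (α + ξ) ^ 2 := by
    nlinarith [mul_pos hαpos hB]
  refine ⟨hmain, ?_⟩
  have hξne : ξ ≠ 0 := ne_of_lt h2
  have hαξ : α + ξ ≠ 0 := by
    intro h
    rw [h] at hmain
    nlinarith [sq_nonneg ξ, sq_nonneg α, pow_pos (abs_pos.mpr hξne) 2, sq_abs ξ]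
  rw [div_lt_one (abs_pos.mpr hαξ)]
  have hs : Real.sqrt (1 + α ^ 2) * |ξ| = Real.sqrt ((1 + α ^ 2) * ξ ^ 2) := by
    rw [Real.sqrt_mul (by positivity), Real.sqrt_sq_eq_abs]
  rw [hs, ← Real.sqrt_sq_eq_abs (α + ξ)]
  exact Real.sqrt_lt_sqrt (by positivity) hmain
end

section
/- Define Ξ₂(α) = √(1+α²)·ξ⁺/(α+ξ⁺) for α > 0, where ξ⁺ > 0. Then Ξ₂ is strictly decreasing on (0, 1/ξ⁺) and strictly increasing on (1/ξ⁺, ∞); hence Ξ₂ attains its minimum on (0,∞) at α = 1/ξ⁺. -/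
lemma sqrt_form (ξp : ℝ) (hξp : 0 < ξp) (α : ℝ) (hα : 0 < α) :
    Real.sqrt (1 + α ^ 2) * ξp / (α + ξp)
      = Real.sqrt ((1 + α ^ 2) * ξp ^ 2 / (α + ξp) ^ 2) := by
  rw [Real.sqrt_div (by positivity), Real.sqrt_mul (by positivity),
    Real.sqrt_sq hξp.le, Real.sqrt_sq (by linarith)]

theorem stmt_16 (ξp : ℝ) (hξp : 0 < ξp) :
    StrictAntiOn (fun α : ℝ => Real.sqrt (1 + α ^ 2) * ξp / (α + ξp))
        (Set.Ioo 0 (1 / ξp)) ∧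
    StrictMonoOn (fun α : ℝ => Real.sqrt (1 + α ^ 2) * ξp / (α + ξp))
        (Set.Ioi (1 / ξp)) ∧
    (∀ α : ℝ, 0 < α →
        Real.sqrt (1 + (1 / ξp) ^ 2) * ξp / (1 / ξp + ξp) ≤
          Real.sqrt (1 + α ^ 2) * ξp / (α + ξp)) := by
  refine ⟨?_, ?_, ?_⟩
  · intro a ha b hb hab
    simp only
    obtain ⟨ha0, ha2⟩ := ha
    obtain ⟨hb0, hb2⟩ := hb
    rw [sqrt_form ξp hξp a ha0, sqrt_form ξp hξp b hb0]
    apply Real.sqrt_lt_sqrt (by positivity)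
    have ha1 : a * ξp < 1 := by rw [lt_div_iff₀ hξp] at ha2; linarith
    have hb1 : b * ξp < 1 := by rw [lt_div_iff₀ hξp] at hb2; linarith
    rw [div_lt_div_iff₀ (by positivity) (by positivity)]
    nlinarith [hξp,
      mul_pos (mul_pos (mul_pos (sub_pos.2 hab) (mul_pos ha0 hξp)) (sub_pos.2 hb1)) (mul_pos hξp hξp),
      mul_pos (mul_pos (mul_pos (sub_pos.2 hab) (mul_pos hb0 hξp)) (sub_pos.2 ha1)) (mul_pos hξp hξp),
      mul_pos (mul_pos (mul_pos (sub_pos.2 hab) (mul_pos hξp hξp)) (sub_pos.2 ha1)) (mul_pos hξp hξp),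
      mul_pos (mul_pos (mul_pos (sub_pos.2 hab) (mul_pos hξp hξp)) (sub_pos.2 hb1)) (mul_pos hξp hξp)]
  · intro a ha b hb hab
    simp only [Set.mem_Ioi] at ha hb
    have ha0 : 0 < a := lt_trans (by positivity) ha
    have hb0 : 0 < b := lt_trans (by positivity) hb
    simp only
    rw [sqrt_form ξp hξp a ha0, sqrt_form ξp hξp b hb0]
    apply Real.sqrt_lt_sqrt (by positivity)
    have ha1 : 1 < a * ξp := by rw [div_lt_iff₀ hξp] at ha; linarith
    have hb1 : 1 < b * ξp := by rw [div_lt_iff₀ hξp] at hb; linarith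
    rw [div_lt_div_iff₀ (by positivity) (by positivity)]
    nlinarith [hξp,
      mul_pos (mul_pos (mul_pos (sub_pos.2 hab) (mul_pos ha0 hξp)) (sub_pos.2 hb1)) (mul_pos hξp hξp),
      mul_pos (mul_pos (mul_pos (sub_pos.2 hab) (mul_pos hb0 hξp)) (sub_pos.2 ha1)) (mul_pos hξp hξp),
      mul_pos (mul_pos (mul_pos (sub_pos.2 hab) (mul_pos hξp hξp)) (sub_pos.2 ha1)) (mul_pos hξp hξp),
      mul_pos (mul_pos (mul_pos (sub_pos.2 hab) (mul_pos hξp hξp)) (sub_pos.2 hb1)) (mul_pos hξp hξp)]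
  · intro α hα
    rw [sqrt_form ξp hξp α hα, sqrt_form ξp hξp (1/ξp) (by positivity)]
    apply Real.sqrt_le_sqrt
    rw [div_le_div_iff₀ (by positivity) (by positivity)]
    have hne : ξp ≠ 0 := hξp.ne'
    have hrw : (1 + (1 / ξp) ^ 2) * ξp ^ 2 = ξp ^ 2 + 1 := by field_simp
    have hrw2 : (1 / ξp + ξp) ^ 2 = (1 + ξp ^ 2) ^ 2 / ξp ^ 2 := by field_simp
    rw [hrw, hrw2]
    rw [mul_div_assoc', le_div_iff₀ (by positivity)]
    nlinarith [mul_nonneg (sq_nonneg (1 - α * ξp)) (by positivity : (0:ℝ) ≤ 1 + ξp ^ 2),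
      mul_nonneg (mul_nonneg (sq_nonneg (1 - α * ξp)) (by positivity : (0:ℝ) ≤ 1 + ξp ^ 2)) (sq_nonneg ξp)]
end

section
/- Let W be real symmetric positive definite and T real symmetric invertible, α > 0, and set Z = W^{1/2} T⁻¹ W^{1/2} with spectral decomposition Z q_j = ξ_j q_j (q_j orthonormal). Then the complex matrix P⁻¹A, where P = i((α+1)/α)T and A = W + iT, has eigenvalues η_j = (α/(α+1))(1 − iξ_j) with eigenvectors x_j = W^{−1/2} q_j. -/
open Matrix

/-!
Put `S = W^{1/2}` and `x = S⁻¹ q`. Multiplying `S T⁻¹ S q = ξ q` on the left by `T S⁻¹` turns it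
into the generalized eigenvalue equation `W x = ξ T x` of the real pencil `(W, T)`, which persists
over `ℂ`. Hence, with `c = i (α + 1) / α`, `P⁻¹ A x = c⁻¹ T⁻¹ (W + i T) x = c⁻¹ (ξ + i) x`, and
`c⁻¹ (ξ + i) = α / (α + 1) · (1 - i ξ)`.
-/

/-- The square root of a positive semidefinite matrix, as defined in the older Mathlib
(removed since; re-stated here with its old definition). -/
noncomputable def Matrix.PosSemidef.sqrt {n 𝕜 : Type*} [Fintype n] [DecidableEq n] [RCLike 𝕜]
    [PartialOrder 𝕜]    {A : Matrix n n 𝕜} (hA : A.PosSemidef) : Matrix n n 𝕜 :=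
  hA.1.eigenvectorUnitary.1 * diagonal ((↑) ∘ (√·) ∘ hA.1.eigenvalues) *
    (star hA.1.eigenvectorUnitary : Matrix n n 𝕜)

open scoped ComplexOrder in
theorem Matrix.PosSemidef.sqrt_mul_self {n 𝕜 : Type*} [Fintype n] [DecidableEq n] [RCLike 𝕜]
    {A : Matrix n n 𝕜} (hA : A.PosSemidef) : hA.sqrt * hA.sqrt = A := by
  have hU := Unitary.coe_star_mul_self hA.1.eigenvectorUnitary
  conv_rhs => rw [hA.1.spectral_theorem, Unitary.conjStarAlgAut_apply]
  simp only [Matrix.PosSemidef.sqrt, Matrix.mul_assoc]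
  rw [← Matrix.mul_assoc _ hA.1.eigenvectorUnitary.1, hU, Matrix.one_mul,
    ← Matrix.mul_assoc (diagonal _), diagonal_mul_diagonal]
  congr 3
  funext i
  simp only [Function.comp_apply, ← RCLike.ofReal_mul, Real.mul_self_sqrt (hA.eigenvalues_nonneg i)]

theorem Matrix.mul_self_mulVec_inv_mulVec_eq_smul {n R : Type*} [Fintype n] [DecidableEq n]
    [CommRing R] {S T : Matrix n n R} (hS : IsUnit S.det) (hT : IsUnit T.det) {ξ : R}
    {q : n → R} (h : (S * T⁻¹ * S) *ᵥ q = ξ • q) :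
    (S * S) *ᵥ (S⁻¹ *ᵥ q) = ξ • T *ᵥ (S⁻¹ *ᵥ q) :=
  calc (S * S) *ᵥ (S⁻¹ *ᵥ q) = S *ᵥ q := by
        rw [mulVec_mulVec, mul_nonsing_inv_cancel_right _ _ hS]
    _ = (T * S⁻¹) *ᵥ ((S * T⁻¹ * S) *ᵥ q) := by
        rw [mulVec_mulVec, Matrix.mul_assoc, ← Matrix.mul_assoc S⁻¹, ← Matrix.mul_assoc S⁻¹,
          nonsing_inv_mul _ hS, Matrix.one_mul, mul_nonsing_inv_cancel_left _ _ hT]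
    _ = ξ • T *ᵥ (S⁻¹ *ᵥ q) := by rw [h, mulVec_smul, mulVec_mulVec]

theorem Matrix.smul_inv_mul_add_smul_mulVec {n K : Type*} [Fintype n] [DecidableEq n] [Field K]
    {W T : Matrix n n K} (hT : IsUnit T.det) {μ : K} {x : n → K} (h : W *ᵥ x = μ • T *ᵥ x)
    (c d : K) : ((c • T)⁻¹ * (W + d • T)) *ᵥ x = (c⁻¹ * (μ + d)) • x := by
  have hinv : (c • T)⁻¹ = c⁻¹ • T⁻¹ := by
    rcases eq_or_ne c 0 with rfl | hc
    · simp
    · exact Matrix.inv_smul' T (Units.mk0 c hc) hT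
  rw [hinv, ← mulVec_mulVec, add_mulVec, smul_mulVec d, h, ← add_smul, smul_mulVec, mulVec_smul,
    mulVec_mulVec, nonsing_inv_mul _ hT, one_mulVec, smul_smul]

theorem Matrix.map_ofReal_mulVec {m n : Type*} [Fintype n] (M : Matrix m n ℝ) (v : n → ℝ) :
    M.map Complex.ofReal *ᵥ (Complex.ofReal ∘ v) = Complex.ofReal ∘ (M *ᵥ v) :=
  funext fun i ↦ (Complex.ofRealHom.map_mulVec M v i).symm

theorem stmt_17_general {n : ℕ} (W T : Matrix (Fin n) (Fin n) ℝ)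
    (hW : W.PosDef) (hTinv : IsUnit T)
    (α : ℝ)
    (ξ : ℝ) (q : Fin n → ℝ) (hq : q ≠ 0)
    (heig : (hW.posSemidef.sqrt * T⁻¹ * hW.posSemidef.sqrt) *ᵥ q = ξ • q) :
    ((((Complex.I * ((α + 1) / α)) • T.map Complex.ofReal)⁻¹ *
        (W.map Complex.ofReal + Complex.I • T.map Complex.ofReal)) *ᵥ
          (Complex.ofReal ∘ (hW.posSemidef.sqrt⁻¹ *ᵥ q)))
      = (((α : ℂ) / (α + 1)) * (1 - Complex.I * (ξ : ℂ))) •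
          (Complex.ofReal ∘ (hW.posSemidef.sqrt⁻¹ *ᵥ q)) ∧
    (Complex.ofReal ∘ (hW.posSemidef.sqrt⁻¹ *ᵥ q)) ≠ 0 := by
  set S := hW.posSemidef.sqrt
  have hSS : S * S = W := hW.posSemidef.sqrt_mul_self
  have hS : IsUnit S.det :=
    isUnit_of_mul_isUnit_left (det_mul S S ▸ hSS ▸ (isUnit_iff_isUnit_det W).mp hW.isUnit)
  have hT : IsUnit T.det := (isUnit_iff_isUnit_det T).mp hTinv
  set x := S⁻¹ *ᵥ q
  have hpencil : W *ᵥ x = ξ • T *ᵥ x := hSS ▸ mul_self_mulVec_inv_mulVec_eq_smul hS hT heig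
  have hx : x ≠ 0 := fun h ↦ hq <|
    calc q = S *ᵥ x := by rw [mulVec_mulVec, mul_nonsing_inv S hS, one_mulVec]
      _ = 0 := by rw [h, mulVec_zero]
  have hpencilC : W.map Complex.ofReal *ᵥ (Complex.ofReal ∘ x)
      = (ξ : ℂ) • T.map Complex.ofReal *ᵥ (Complex.ofReal ∘ x) := by
    rw [map_ofReal_mulVec, map_ofReal_mulVec, hpencil]
    funext i
    simp
  have hTC : IsUnit (T.map Complex.ofReal).det := by
    have h := hT.map Complex.ofRealHom
    rw [RingHom.map_det] at h
    exact h
  refine ⟨?_, fun h ↦ hx (funext fun i ↦ by simpa using congrFun h i)⟩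
  rw [smul_inv_mul_add_smul_mulVec hTC hpencilC, mul_inv, Complex.inv_I, inv_div]
  congr 1
  linear_combination (-(α : ℂ) / (α + 1)) * Complex.I_sq

theorem stmt_17 {n : ℕ} (W T : Matrix (Fin n) (Fin n) ℝ)
    (hW : W.PosDef) (hT : T.IsSymm) (hTinv : IsUnit T)
    (α : ℝ) (hα : 0 < α)
    (ξ : ℝ) (q : Fin n → ℝ) (hq : q ≠ 0)
    (heig : (hW.posSemidef.sqrt * T⁻¹ * hW.posSemidef.sqrt) *ᵥ q = ξ • q) :
    ((((Complex.I * ((α + 1) / α)) • T.map Complex.ofReal)⁻¹ *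
        (W.map Complex.ofReal + Complex.I • T.map Complex.ofReal)) *ᵥ
          (Complex.ofReal ∘ (hW.posSemidef.sqrt⁻¹ *ᵥ q)))
      = (((α : ℂ) / (α + 1)) * (1 - Complex.I * (ξ : ℂ))) •
          (Complex.ofReal ∘ (hW.posSemidef.sqrt⁻¹ *ᵥ q)) ∧
    (Complex.ofReal ∘ (hW.posSemidef.sqrt⁻¹ *ᵥ q)) ≠ 0 :=
  stmt_17_general W T hW hTinv α ξ q hq heig
end
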